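/- Let C ⊆ GF(4)^n be an additive code of type 4^{k_0}2^{k_1} in standard form with k_1 = 0, with C ⊆ C⊥ (trace-Hermitian dual) and C ≠ C⊥. Let d be the minimum Hamming weight of the codewords in C⊥ \ C, and set e = ⌊(d−1)/2⌋. Then Σ_{i=0}^{e} 3^i · C(n−k_0, i) ≤ 4^{k_0} (= 4^{(n−k)/2}, where k = n − 2k_0). -/

import Mathlib

open Finset

/-- The field `GF(4)`. -/
abbrev F4 := GaloisField 2 2

/-- The Hamming weight of a vector: the number of nonzero coordinates. -/
noncomputable def hWt {ι : Type} [Fintype ι] {F : Type} [Zero F] (v : ι → F) : ℕ :=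
  Nat.card {i : ι // v i ≠ 0}

/-- The trace-Hermitian inner product on `GF(4)^n`:
`u*v = ∑ᵢ (uᵢ vᵢ² + uᵢ² vᵢ)`. -/
noncomputable def trInner {ι : Type} [Fintype ι] (u v : ι → F4) : F4 :=
  ∑ i, (u i * (v i) ^ 2 + (u i) ^ 2 * v i)

/-- The dual of a set of vectors in `GF(4)^n` with respect to the trace-Hermitian
inner product. -/
noncomputable def trDual {ι : Type} [Fintype ι] (C : Set (ι → F4)) : Set (ι → F4) :=
  {v | ∀ u ∈ C, trInner v u = 0}

/-- The rows of the standard-form generator matrix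
`[[I_{k₀}, ωA₁, B₁], [ωI_{k₀}, ωA₂, B₂], [0, I_{k₁}, A₃]]` of an additive code of
type `4^{k₀}2^{k₁}` and length `n = k₀ + k₁ + m`, with column blocks of sizes
`k₀, k₁, m`. -/
noncomputable def stdRow (k0 k1 m : ℕ) (ω : F4)
    (A1 A2 : Matrix (Fin k0) (Fin k1) F4) (A3 : Matrix (Fin k1) (Fin m) F4)
    (B1 B2 : Matrix (Fin k0) (Fin m) F4) :
    (Fin k0 ⊕ Fin k0 ⊕ Fin k1) → (Fin k0 ⊕ Fin k1 ⊕ Fin m) → F4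
  | Sum.inl i =>
      Sum.elim (fun j => if j = i then 1 else 0)
        (Sum.elim (fun j => ω * A1 i j) (fun j => B1 i j))
  | Sum.inr (Sum.inl i) =>
      Sum.elim (fun j => if j = i then ω else 0)
        (Sum.elim (fun j => ω * A2 i j) (fun j => B2 i j))
  | Sum.inr (Sum.inr i) =>
      Sum.elim (fun _ => 0)
        (Sum.elim (fun j => if j = i then 1 else 0) (fun j => A3 i j))

/-! ### Auxiliary facts about `F4` -/

noncomputable instance : Fintype F4 := Fintype.ofFinite _

lemma F4_card : Fintype.card F4 = 4 := by
  have := GaloisField.card 2 2 (by norm_num); simpa [Nat.card_eq_fintype_card] using this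

lemma F4_pow4 (a : F4) : a ^ 4 = a := by
  have := FiniteField.pow_card a; rwa [F4_card] at this

lemma F4_two : (2 : F4) = 0 := by exact_mod_cast CharP.cast_eq_zero F4 2

lemma F4_add_self (a : F4) : a + a = 0 := by linear_combination a * F4_two

lemma F4_sub_eq_add (a b : F4) : a - b = a + b := by linear_combination -F4_add_self b

lemma F4_idem (x : F4) (h : x * x = x) : x = 0 ∨ x = 1 := by
  rcases mul_eq_zero.1 (show x * (x - 1) = 0 by linear_combination h) with h'|h'
  · exact Or.inl h'
  · exact Or.inr (by linear_combination h')

lemma F4_one_add_omega_ne (ω : F4) (hω : orderOf ω = 3) : ω ≠ 0 ∧ ω ≠ 1 ∧ (1 : F4) + ω ≠ 0 := by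
  have hω0 : ω ≠ 0 := by
    rintro rfl
    have := pow_orderOf_eq_one (0 : F4)
    rw [hω] at this
    simp at this
  have hω1 : ω ≠ 1 := by
    rintro rfl
    rw [orderOf_one] at hω; omega
  refine ⟨hω0, hω1, fun h => hω1 ?_⟩
  linear_combination h - F4_add_self 1

/-! ### Auxiliary facts about `trInner` -/

section trInner

variable {ι : Type} [Fintype ι]

lemma trInner_sq (u v : ι → F4) : trInner u v * trInner u v = trInner u v := by
  have h : frobenius F4 2 (trInner u v) = trInner u v := by
    unfold trInner
    rw [map_sum]
    congr 1; funext i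
    simp only [frobenius_def]
    have h4u := F4_pow4 (u i); have h4v := F4_pow4 (v i)
    ring_nf
    linear_combination (v i ^ 2) * h4u + (u i ^ 2) * h4v + (u i ^ 3 * v i ^ 3) * F4_two
  calc trInner u v * trInner u v = frobenius F4 2 (trInner u v) := by
        simp [frobenius_def, sq]
    _ = trInner u v := h

lemma trInner_zero_or_one (u v : ι → F4) : trInner u v = 0 ∨ trInner u v = 1 :=
  F4_idem _ (trInner_sq u v)

lemma trInner_add_left (u u' v : ι → F4) :
    trInner (u + u') v = trInner u v + trInner u' v := by
  unfold trInner
  rw [← Finset.sum_add_distrib]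
  congr 1; funext i
  simp only [Pi.add_apply]
  linear_combination (u i * u' i * v i) * F4_two

lemma trInner_comm (u v : ι → F4) : trInner u v = trInner v u := by
  unfold trInner; congr 1; funext i; ring

lemma trInner_smul_left (c : ZMod 2) (u v : ι → F4) :
    trInner (c • u) v = c • trInner u v := by
  rcases (show ∀ a : ZMod 2, a = 0 ∨ a = 1 by decide) c with rfl | rfl
  · simp [trInner]
  · simp

lemma trInner_zero_right (v : ι → F4) : trInner v 0 = 0 := by
  simp [trInner]

lemma trInner_add_right (v u u' : ι → F4) :
    trInner v (u + u') = trInner v u + trInner v u' := by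
  rw [trInner_comm, trInner_add_left, trInner_comm u, trInner_comm u']

lemma trInner_smul_right (c : ZMod 2) (v u : ι → F4) :
    trInner v (c • u) = c • trInner v u := by
  rw [trInner_comm, trInner_smul_left, trInner_comm]

lemma trInner_span_zero {s : Set (ι → F4)} (v : ι → F4) (h : ∀ u ∈ s, trInner v u = 0) :
    ∀ u ∈ Submodule.span (ZMod 2) s, trInner v u = 0 := by
  intro u hu
  induction hu using Submodule.span_induction with
  | mem x hx => exact h x hx
  | zero => exact trInner_zero_right v
  | add x y _ _ hx hy => rw [trInner_add_right, hx, hy, add_zero]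
  | smul c x _ hx => rw [trInner_smul_right, hx, smul_zero]

/-! ### Cardinality of the quotient by the dual -/

lemma card_quot_le {ι' : Type} [Fintype ι'] (G : ι' → (ι → F4))
    (D : Submodule (ZMod 2) (ι → F4))
    (hD : ∀ v, (∀ r, trInner v (G r) = 0) → v ∈ D) :
    Nat.card ((ι → F4) ⧸ D) ≤ 2 ^ Fintype.card ι' := by
  classical
  let φ : (ι → F4) →ₗ[ZMod 2] (ι' → F4) :=
    { toFun := fun v r => trInner v (G r)
      map_add' := fun u u' => by funext r; exact trInner_add_left u u' (G r)
      map_smul' := fun c u => by funext r; exact trInner_smul_left c u (G r) }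
  have hker : LinearMap.ker φ ≤ D := by
    intro v hv
    exact hD v fun r => congrFun hv r
  have h1 : Nat.card ((ι → F4) ⧸ D) ≤ Nat.card ((ι → F4) ⧸ (LinearMap.ker φ)) := by
    apply Nat.card_le_card_of_surjective
      (Submodule.mapQ (LinearMap.ker φ) D LinearMap.id hker)
    intro x
    obtain ⟨y, rfl⟩ := Submodule.Quotient.mk_surjective D x
    exact ⟨Submodule.Quotient.mk y, by simp [Submodule.mapQ_apply]⟩
  have h2 : Nat.card ((ι → F4) ⧸ (LinearMap.ker φ)) = Nat.card (LinearMap.range φ) :=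
    Nat.card_congr φ.quotKerEquivRange.toEquiv
  have h3 : Nat.card (LinearMap.range φ) ≤ Nat.card (ι' → Bool) := by
    apply Nat.card_le_card_of_injective
      (fun f : LinearMap.range φ => fun r => decide ((f : ι' → F4) r = 1))
    intro f g hfg
    ext r
    obtain ⟨u, hu⟩ := f.2
    obtain ⟨w, hw⟩ := g.2
    have hf01 : (f : ι' → F4) r = 0 ∨ (f : ι' → F4) r = 1 := by
      rw [← hu]; exact trInner_zero_or_one u (G r)
    have hg01 : (g : ι' → F4) r = 0 ∨ (g : ι' → F4) r = 1 := by
      rw [← hw]; exact trInner_zero_or_one w (G r)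
    have := congrFun hfg r
    simp only [decide_eq_decide] at this
    rcases hf01 with hf | hf <;> rcases hg01 with hg | hg <;> simp_all
  have h4 : Nat.card (ι' → Bool) = 2 ^ Fintype.card ι' := by
    simp [Nat.card_eq_fintype_card]
  omega

end trInner

/-! ### Codewords vanishing on the first block -/

lemma span_first_block_zero (k0 m : ℕ) (ω : F4) (hω : orderOf ω = 3)
    (A1 A2 : Matrix (Fin k0) (Fin 0) F4) (A3 : Matrix (Fin 0) (Fin m) F4)
    (B1 B2 : Matrix (Fin k0) (Fin m) F4)
    (v : (Fin k0 ⊕ Fin 0 ⊕ Fin m) → F4)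
    (hv : v ∈ Submodule.span (ZMod 2) (Set.range (stdRow k0 0 m ω A1 A2 A3 B1 B2)))
    (h0 : ∀ i, v (Sum.inl i) = 0) : v = 0 := by
  obtain ⟨hω0, hω1, hω2⟩ := F4_one_add_omega_ne ω hω
  obtain ⟨c, hc⟩ := (Submodule.mem_span_range_iff_exists_fun (ZMod 2)).1 hv
  have hz2 : ∀ a : ZMod 2, a = 0 ∨ a = 1 := by decide
  have hcz : ∀ r, c r = 0 := by
    have key : ∀ i : Fin k0, c (Sum.inl i) • (1 : F4) + c (Sum.inr (Sum.inl i)) • ω = 0 := by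
      intro i
      have := congrFun hc (Sum.inl i)
      rw [h0 i] at this
      rw [Finset.sum_apply] at this
      rw [Fintype.sum_sum_type, Fintype.sum_sum_type] at this
      simp only [Pi.smul_apply, stdRow, Sum.elim_inl, Finset.univ_eq_empty,
        Finset.sum_empty, add_zero, smul_ite, smul_zero] at this
      rw [Finset.sum_ite_eq Finset.univ i (fun j => c (Sum.inl j) • (1:F4)),
        Finset.sum_ite_eq Finset.univ i (fun j => c (Sum.inr (Sum.inl j)) • ω)] at this
      simpa using this
    rintro (i | i | i)
    · rcases hz2 (c (Sum.inl i)) with h | h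
      · exact h
      · exfalso
        have := key i
        rw [h] at this
        rcases hz2 (c (Sum.inr (Sum.inl i))) with h' | h' <;> rw [h'] at this <;>
          simp at this
        exact hω2 (by linear_combination this)
    · rcases hz2 (c (Sum.inr (Sum.inl i))) with h | h
      · exact h
      · exfalso
        have := key i
        rw [h] at this
        rcases hz2 (c (Sum.inl i)) with h' | h' <;> rw [h'] at this <;> simp at this
        · exact hω0 this
        · exact hω2 this
    · exact i.elim0
  rw [← hc]
  apply Finset.sum_eq_zero
  intro r _
  rw [hcz r, zero_smul]

/-! ### Hamming weight lemmas -/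

lemma hWt_eq_card_filter {ι : Type} [Fintype ι] {F : Type} [Zero F] [DecidableEq F] (v : ι → F) :
    hWt v = (univ.filter fun i => v i ≠ 0).card := by
  classical
  rw [hWt, Nat.card_eq_fintype_card, Fintype.card_subtype]

lemma hWt_eq_zero {ι F : Type} [Fintype ι] [Zero F] {v : ι → F} (h : hWt v = 0) : v = 0 := by
  classical
  rw [hWt_eq_card_filter, Finset.card_eq_zero, Finset.filter_eq_empty_iff] at h
  funext i
  simpa using h (Finset.mem_univ i)

lemma hWt_add_le {ι F : Type} [Fintype ι] [AddMonoid F] (x y : ι → F) :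
    hWt (x + y) ≤ hWt x + hWt y := by
  classical
  rw [hWt_eq_card_filter, hWt_eq_card_filter, hWt_eq_card_filter]
  refine le_trans (Finset.card_le_card ?_) (Finset.card_union_le _ _)
  intro i hi
  simp only [Finset.mem_filter, Finset.mem_univ, true_and, Pi.add_apply] at hi
  simp only [Finset.mem_union, Finset.mem_filter, Finset.mem_univ, true_and]
  by_contra h
  push_neg at h
  rw [h.1, h.2, add_zero] at hi
  exact hi rfl

/-- Embedding of `GF(4)^m` into the last block of coordinates. -/
noncomputable def emb (k0 m : ℕ) (x : Fin m → F4) : (Fin k0 ⊕ Fin 0 ⊕ Fin m) → F4 :=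
  Sum.elim (fun _ => 0) (Sum.elim (fun j => j.elim0) x)

lemma emb_add (k0 m : ℕ) (x y : Fin m → F4) :
    emb k0 m x + emb k0 m y = emb k0 m (x + y) := by
  funext i
  rcases i with i | i | i
  · simp [emb]
  · exact i.elim0
  · simp [emb]

lemma hWt_emb_le (k0 m : ℕ) (x : Fin m → F4) : hWt (emb k0 m x) ≤ hWt x := by
  classical
  rw [hWt_eq_card_filter, hWt_eq_card_filter]
  have heq : (univ.filter fun i => emb k0 m x i ≠ 0) =
      (univ.filter fun j => x j ≠ 0).map
        ⟨fun j => Sum.inr (Sum.inr j), fun a b h => by simpa using h⟩ := by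
    ext i
    rcases i with i | i | i
    · simp only [Finset.mem_filter, Finset.mem_univ, true_and, Finset.mem_map]; simp [emb]
    · exact i.elim0
    · simp only [Finset.mem_filter, Finset.mem_univ, true_and, Finset.mem_map]
      exact ⟨fun h => ⟨i, h, rfl⟩, fun ⟨a, ha, hai⟩ => by
        have : a = i := Sum.inr.inj (Sum.inr.inj hai)
        subst this; exact ha⟩
  rw [heq, Finset.card_map]

/-! ### Counting vectors of bounded weight -/

lemma card_supp_eq (m : ℕ) (s : Finset (Fin m)) :
    Nat.card {x : Fin m → F4 // ∀ j, x j ≠ 0 ↔ j ∈ s} = 3 ^ s.card := by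
  classical
  have e : {x : Fin m → F4 // ∀ j, x j ≠ 0 ↔ j ∈ s} ≃ (s → {a : F4 // a ≠ 0}) :=
    { toFun := fun x j => ⟨x.1 j, (x.2 j).2 j.2⟩
      invFun := fun f => ⟨fun j => if h : j ∈ s then (f ⟨j, h⟩).1 else 0, by
        intro j
        constructor
        · intro hne
          by_contra h
          simp [h] at hne
        · intro h
          simp only [h, dif_pos]
          exact (f ⟨j, h⟩).2⟩
      left_inv := fun x => by
        ext j
        by_cases h : j ∈ s
        · simp [h]
        · simp only [h, dif_neg, not_false_iff]
          exact (not_not.1 fun hne => h ((x.2 j).1 hne)).symm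
      right_inv := fun f => by ext j; simp [j.2] }
  rw [Nat.card_congr e]
  have h3 : Nat.card {a : F4 // a ≠ 0} = 3 := by
    have h := Fintype.card_subtype_compl (α := F4) (fun a => a = 0)
    rw [Nat.card_eq_fintype_card]
    calc Fintype.card {a : F4 // a ≠ 0}
        = Fintype.card F4 - Fintype.card {a : F4 // a = 0} := h
      _ = 3 := by simp [F4_card, Fintype.card_subtype_eq]
  rw [Nat.card_eq_fintype_card, Fintype.card_fun, ← Nat.card_eq_fintype_card, h3,
    Fintype.card_coe]

lemma card_wt_le (m e : ℕ) :
    Nat.card {x : Fin m → F4 // hWt x ≤ e} = ∑ i ∈ Finset.range (e+1), 3 ^ i * m.choose i := by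
  classical
  rw [Nat.card_eq_fintype_card, Fintype.card_subtype]
  have hsplit : (univ.filter fun x : Fin m → F4 => hWt x ≤ e) =
      (range (e+1)).biUnion (fun i => univ.filter fun x : Fin m → F4 => hWt x = i) := by
    ext x
    simp [Nat.lt_succ_iff]
  rw [hsplit, card_biUnion]
  · apply Finset.sum_congr rfl
    intro i _
    have hsplit2 : (univ.filter fun x : Fin m → F4 => hWt x = i) =
        (powersetCard i (univ : Finset (Fin m))).biUnion
          (fun s => univ.filter fun x : Fin m → F4 => ∀ j, x j ≠ 0 ↔ j ∈ s) := by
      ext x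
      simp only [mem_filter, mem_univ, true_and, mem_biUnion, mem_powersetCard_univ]
      constructor
      · intro hx
        exact ⟨univ.filter fun j => x j ≠ 0, by rw [← hWt_eq_card_filter, hx],
          fun j => by simp⟩
      · rintro ⟨s, hcard, hs⟩
        rw [hWt_eq_card_filter, ← hcard]
        congr 1
        ext j
        simp [hs j]
    rw [hsplit2, card_biUnion]
    · have : ∀ s ∈ powersetCard i (univ : Finset (Fin m)),
          (univ.filter fun x : Fin m → F4 => ∀ j, x j ≠ 0 ↔ j ∈ s).card = 3 ^ i := by
        intro s hs
        rw [mem_powersetCard_univ] at hs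
        rw [← Fintype.card_subtype, ← Nat.card_eq_fintype_card, card_supp_eq, hs]
      rw [Finset.sum_congr rfl this, Finset.sum_const, card_powersetCard, card_univ,
        Fintype.card_fin, smul_eq_mul, mul_comm]
    · intro s hs t ht hst
      simp only [Finset.disjoint_left, mem_filter, mem_univ, true_and]
      intro x hxs hxt
      exact hst (by ext j; rw [← hxs j, hxt j])
  · intro a ha b hb hab
    simp only [Finset.disjoint_left, mem_filter, mem_univ, true_and]
    intro x hxa hxb
    exact hab (hxa ▸ hxb ▸ rfl)

/-! ### Main theorem -/

/-- Hamming-type bound in the case `k₁ = 0`: for a self-orthogonal additive code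
`C ⊆ C⊥`, `C ≠ C⊥`, of type `4^{k₀}` in standard form with `d` the minimum weight of
`C⊥ \ C` and `e = ⌊(d−1)/2⌋`, `∑_{i=0}^{e} 3^i C(n−k₀, i) ≤ 4^{k₀}`. -/
theorem stmt14 (k0 m : ℕ) (ω : F4)
    (A1 A2 : Matrix (Fin k0) (Fin 0) F4) (A3 : Matrix (Fin 0) (Fin m) F4)
    (B1 B2 : Matrix (Fin k0) (Fin m) F4)
    (hω : orderOf ω = 3)
    (hB1 : ∀ i j, B1 i j = 0 ∨ B1 i j = 1) (hB2 : ∀ i j, B2 i j = 0 ∨ B2 i j = 1)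
    (hli : LinearIndependent (ZMod 2) (stdRow k0 0 m ω A1 A2 A3 B1 B2))
    (C : Submodule (ZMod 2) ((Fin k0 ⊕ Fin 0 ⊕ Fin m) → F4))
    (hC : C = Submodule.span (ZMod 2) (Set.range (stdRow k0 0 m ω A1 A2 A3 B1 B2)))
    (hself : (C : Set ((Fin k0 ⊕ Fin 0 ⊕ Fin m) → F4)) ⊆ trDual (C : Set ((Fin k0 ⊕ Fin 0 ⊕ Fin m) → F4)))
    (hne : (C : Set ((Fin k0 ⊕ Fin 0 ⊕ Fin m) → F4)) ≠ trDual (C : Set ((Fin k0 ⊕ Fin 0 ⊕ Fin m) → F4)))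
    (d : ℕ)
    (hd : IsLeast {w : ℕ | ∃ v ∈ trDual (C : Set ((Fin k0 ⊕ Fin 0 ⊕ Fin m) → F4)), v ∉ C ∧ hWt v = w} d) :
    ∑ i ∈ Finset.range ((d - 1) / 2 + 1), 3 ^ i * Nat.choose m i ≤ 4 ^ k0 := by
  classical
  set G := stdRow k0 0 m ω A1 A2 A3 B1 B2 with hG
  -- the dual as a submodule
  let D : Submodule (ZMod 2) ((Fin k0 ⊕ Fin 0 ⊕ Fin m) → F4) :=
    { carrier := trDual (C : Set ((Fin k0 ⊕ Fin 0 ⊕ Fin m) → F4))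
      add_mem' := fun hu hv w hw => by
        rw [trInner_add_left, hu w hw, hv w hw, add_zero]
      zero_mem' := fun w hw => by
        rw [show (0 : (Fin k0 ⊕ Fin 0 ⊕ Fin m) → F4) = (0 : ZMod 2) • 0 by simp,
          trInner_smul_left, zero_smul]
      smul_mem' := fun c v hv w hw => by
        rw [trInner_smul_left, hv w hw, smul_zero] }
  -- d ≥ 1
  obtain ⟨v0, hv0dual, hv0notC, hv0wt⟩ := hd.1
  have hd1 : 1 ≤ d := by
    by_contra h
    apply hv0notC
    have h0 : d = 0 := by omega
    rw [h0] at hv0wt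
    rw [hWt_eq_zero hv0wt]
    exact C.zero_mem
  set e := (d - 1) / 2 with he
  -- the injection into the quotient
  have hinj : Function.Injective (fun x : {x : Fin m → F4 // hWt x ≤ e} =>
      Submodule.Quotient.mk (p := D) (emb k0 m x.1)) := by
    rintro ⟨x, hx⟩ ⟨y, hy⟩ hxy
    simp only [Submodule.Quotient.eq] at hxy
    have hsub : emb k0 m x - emb k0 m y = emb k0 m (x + y) := by
      rw [← emb_add]
      funext i
      exact F4_sub_eq_add _ _
    rw [hsub] at hxy
    have hxyC : emb k0 m (x + y) ∈ C := by
      by_contra hmem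
      have hge : d ≤ hWt (emb k0 m (x + y)) :=
        hd.2 ⟨emb k0 m (x + y), hxy, hmem, rfl⟩
      have hle1 : hWt (emb k0 m (x + y)) ≤ hWt (x + y) := hWt_emb_le k0 m (x + y)
      have hle2 : hWt (x + y) ≤ hWt x + hWt y := hWt_add_le x y
      have h2e : e * 2 ≤ d - 1 := Nat.div_mul_le_self (d - 1) 2
      omega
    have hz : emb k0 m (x + y) = 0 := by
      apply span_first_block_zero k0 m ω hω A1 A2 A3 B1 B2 _ (hC ▸ hxyC)
      intro i
      rfl
    have hxy0 : x + y = 0 := by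
      funext j
      exact congrFun hz (Sum.inr (Sum.inr j))
    apply Subtype.ext
    funext j
    have := congrFun hxy0 j
    simp only [Pi.add_apply, Pi.zero_apply] at this
    linear_combination this - F4_add_self (y j)
  -- assemble
  have hcard1 : ∑ i ∈ Finset.range (e + 1), 3 ^ i * Nat.choose m i
      = Nat.card {x : Fin m → F4 // hWt x ≤ e} := (card_wt_le m e).symm
  have hcard2 : Nat.card {x : Fin m → F4 // hWt x ≤ e}
      ≤ Nat.card (((Fin k0 ⊕ Fin 0 ⊕ Fin m) → F4) ⧸ D) :=
    Nat.card_le_card_of_injective _ hinj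
  have hcard3 : Nat.card (((Fin k0 ⊕ Fin 0 ⊕ Fin m) → F4) ⧸ D)
      ≤ 2 ^ Fintype.card (Fin k0 ⊕ Fin k0 ⊕ Fin 0) := by
    apply card_quot_le G D
    intro v hv
    intro u hu
    rw [hC] at hu
    exact trInner_span_zero v (by rintro u ⟨r, rfl⟩; exact hv r) u hu
  have hpow : (2 : ℕ) ^ Fintype.card (Fin k0 ⊕ Fin k0 ⊕ Fin 0) = 4 ^ k0 := by
    simp only [Fintype.card_sum, Fintype.card_fin, add_zero]
    rw [show (4 : ℕ) = 2 ^ 2 by norm_num, ← pow_mul]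
    ring_nf
  omega
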